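/- The double integral ∫₀¹∫₀¹ (min(u,v) − uv) / (φ(Φ^{-1}(u)) φ(Φ^{-1}(v))) du dv equals 1, where φ and Φ are the standard normal density and c.d.f. -/

import Mathlib

open MeasureTheory ProbabilityTheory Real Set Filter

noncomputable def stdphi (x : ℝ) : ℝ := gaussianPDFReal 0 1 x
noncomputable def stdPhi (x : ℝ) : ℝ := ∫ t in Set.Iic x, gaussianPDFReal 0 1 t
noncomputable def stdPhiInv (u : ℝ) : ℝ := sInf {x : ℝ | u ≤ stdPhi x}

lemma stdphi_eq (x : ℝ) : stdphi x = (√(2 * π))⁻¹ * rexp (- x ^ 2 / 2) := by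
  simp [stdphi, gaussianPDFReal]

lemma stdphi_pos (x : ℝ) : 0 < stdphi x := gaussianPDFReal_pos 0 1 x one_ne_zero

lemma stdphi_integrable : Integrable stdphi := integrable_gaussianPDFReal 0 1

lemma stdphi_continuous : Continuous stdphi := by
  have : stdphi = fun x => (√(2 * π))⁻¹ * rexp (- x ^ 2 / 2) := funext stdphi_eq
  rw [this]; fun_prop

lemma hasDerivAt_stdphi (x : ℝ) : HasDerivAt stdphi (-x * stdphi x) x := by
  have h1 : HasDerivAt (fun x : ℝ => - x ^ 2 / 2) (-x) x := by
    have := ((hasDerivAt_pow 2 x).neg).div_const 2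
    simpa using this.congr_deriv (by ring)
  have h2 := (h1.exp).const_mul (√(2 * π))⁻¹
  have : ∀ y : ℝ, (√(2 * π))⁻¹ * rexp (- y ^ 2 / 2) = stdphi y := fun y => (stdphi_eq y).symm
  refine HasDerivAt.congr_of_eventuallyEq ?_ (Filter.Eventually.of_forall fun y => (stdphi_eq y))
  refine h2.congr_deriv ?_
  rw [stdphi_eq]; ring

lemma stdPhi_eq (x : ℝ) : stdPhi x = stdPhi 0 + ∫ t in (0:ℝ)..x, stdphi t := by
  have := intervalIntegral.integral_Iic_sub_Iic
    (stdphi_integrable.integrableOn (s := Iic 0)) (stdphi_integrable.integrableOn (s := Iic x))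
  simp only [stdPhi, stdphi] at *
  linarith [this]

lemma hasDerivAt_stdPhi (x : ℝ) : HasDerivAt stdPhi (stdphi x) x := by
  have h : HasDerivAt (fun b => ∫ t in (0:ℝ)..b, stdphi t) (stdphi x) x :=
    intervalIntegral.integral_hasDerivAt_right
      (stdphi_integrable.intervalIntegrable)
      stdphi_continuous.aestronglyMeasurable.stronglyMeasurableAtFilter
      stdphi_continuous.continuousAt
  have := (h.const_add (stdPhi 0))
  exact this.congr_of_eventuallyEq (Filter.Eventually.of_forall fun y => (stdPhi_eq y))

lemma stdPhi_continuous : Continuous stdPhi :=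
  continuous_iff_continuousAt.2 fun x => (hasDerivAt_stdPhi x).continuousAt

lemma stdPhi_strictMono : StrictMono stdPhi := by
  apply strictMono_of_deriv_pos
  intro x
  rw [(hasDerivAt_stdPhi x).deriv]
  exact stdphi_pos x

lemma stdPhi_nonneg (x : ℝ) : 0 ≤ stdPhi x :=
  setIntegral_nonneg measurableSet_Iic fun t _ => (stdphi_pos t).le

lemma stdPhi_pos (x : ℝ) : 0 < stdPhi x := by
  have h := stdPhi_strictMono (show x - 1 < x by linarith)
  have := stdPhi_nonneg (x - 1)
  linarith

lemma stdPhi_add_Ioi (x : ℝ) : stdPhi x + ∫ t in Ioi x, stdphi t = 1 := by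
  have := intervalIntegral.integral_Iic_add_Ioi (b := x) (μ := volume)
    (stdphi_integrable.integrableOn) (stdphi_integrable.integrableOn)
  simp only [stdPhi, stdphi] at *
  rw [this]
  exact integral_gaussianPDFReal_eq_one 0 one_ne_zero

lemma stdPhi_lt_one (x : ℝ) : stdPhi x < 1 := by
  have h := stdPhi_add_Ioi x
  have h2 : 0 < ∫ t in Ioi x, stdphi t := by
    have := stdPhi_add_Ioi (x + 1)
    have h3 := stdPhi_strictMono (show x < x + 1 by linarith)
    have h4 : (∫ t in Ioi (x+1), stdphi t) ≥ 0 :=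
      setIntegral_nonneg measurableSet_Ioi fun t _ => (stdphi_pos t).le
    linarith
  linarith

lemma stdphi_le_exp (t : ℝ) : stdphi t ≤ rexp (1/2) * rexp t := by
  rw [stdphi_eq, ← Real.exp_add]
  have h1 : (√(2 * π))⁻¹ ≤ 1 := by
    rw [inv_le_one_iff₀]
    right
    rw [show (1:ℝ) = √1 by simp]
    apply Real.sqrt_le_sqrt
    nlinarith [pi_gt_three]
  have h2 : rexp (- t ^ 2 / 2) ≤ rexp (1/2 + t) := by
    apply Real.exp_le_exp.2
    nlinarith [sq_nonneg (t + 1)]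
  calc (√(2 * π))⁻¹ * rexp (- t ^ 2 / 2) ≤ 1 * rexp (1/2 + t) := by
        apply mul_le_mul h1 h2 (Real.exp_nonneg _) one_pos.le
    _ = rexp (1/2 + t) := one_mul _

lemma stdphi_le_exp_neg (t : ℝ) : stdphi t ≤ rexp (1/2) * rexp (-t) := by
  have := stdphi_le_exp (-t)
  rw [show stdphi (-t) = stdphi t by rw [stdphi_eq, stdphi_eq]; ring_nf] at this
  simpa using this

lemma stdPhi_le (x : ℝ) : stdPhi x ≤ rexp (1/2) * rexp x := by
  have h : stdPhi x ≤ ∫ t in Iic x, rexp (1/2) * rexp t := by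
    apply setIntegral_mono_on stdphi_integrable.integrableOn
      ((integrableOn_exp_Iic x).const_mul _) measurableSet_Iic
    intro t _
    exact stdphi_le_exp t
  rwa [integral_const_mul, integral_exp_Iic] at h

lemma Ioi_stdphi_le (x : ℝ) : (∫ t in Ioi x, stdphi t) ≤ rexp (1/2) * rexp (-x) := by
  have hint : IntegrableOn (fun t : ℝ => rexp (1/2) * rexp (-t)) (Ioi x) := by
    have := (exp_neg_integrableOn_Ioi x (b := 1) one_pos).const_mul (rexp (1/2))
    simpa [IntegrableOn] using this
  have h : (∫ t in Ioi x, stdphi t) ≤ ∫ t in Ioi x, rexp (1/2) * rexp (-t) := by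
    apply setIntegral_mono_on stdphi_integrable.integrableOn hint measurableSet_Ioi
    intro t _
    exact stdphi_le_exp_neg t
  rwa [integral_const_mul, integral_exp_neg_Ioi] at h

lemma tendsto_stdPhi_atBot : Tendsto stdPhi atBot (nhds 0) := by
  refine tendsto_of_tendsto_of_tendsto_of_le_of_le (g := fun _ : ℝ => (0:ℝ))
    (h := fun x => rexp (1/2) * rexp x) tendsto_const_nhds ?_ ?_ ?_
  · have : Tendsto (fun x : ℝ => rexp (1/2) * rexp x) atBot (nhds (rexp (1/2) * 0)) :=
      (Real.tendsto_exp_atBot).const_mul _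
    simpa using this
  · exact fun x => stdPhi_nonneg x
  · exact fun x => stdPhi_le x

lemma tendsto_stdPhi_atTop : Tendsto stdPhi atTop (nhds 1) := by
  have h0 : Tendsto (fun x => ∫ t in Ioi x, stdphi t) atTop (nhds 0) := by
    refine tendsto_of_tendsto_of_tendsto_of_le_of_le (g := fun _ : ℝ => (0:ℝ))
      (h := fun x => rexp (1/2) * rexp (-x)) tendsto_const_nhds ?_ ?_ ?_
    · have : Tendsto (fun x : ℝ => rexp (1/2) * rexp (-x)) atTop (nhds (rexp (1/2) * 0)) :=
        (Real.tendsto_exp_atBot.comp tendsto_neg_atTop_atBot).const_mul _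
      simpa using this
    · exact fun x => setIntegral_nonneg measurableSet_Ioi fun t _ => (stdphi_pos t).le
    · exact fun x => Ioi_stdphi_le x
  have : Tendsto (fun x => 1 - ∫ t in Ioi x, stdphi t) atTop (nhds (1 - 0)) :=
    tendsto_const_nhds.sub h0
  simp only [sub_zero] at this
  apply this.congr
  intro x
  have := stdPhi_add_Ioi x
  linarith

lemma stdPhiInv_stdPhi (y : ℝ) : stdPhiInv (stdPhi y) = y := by
  have : {x : ℝ | stdPhi y ≤ stdPhi x} = Ici y := by
    ext x
    simp [stdPhi_strictMono.le_iff_le]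
  rw [stdPhiInv, this, csInf_Ici]

lemma exists_stdPhi_eq {u : ℝ} (hu : u ∈ Ioo (0:ℝ) 1) : ∃ x, stdPhi x = u := by
  obtain ⟨a, ha⟩ : ∃ a, stdPhi a < u := by
    have := tendsto_stdPhi_atBot.eventually_lt_const hu.1
    exact this.exists
  obtain ⟨b, hb⟩ : ∃ b, u < stdPhi b := by
    have := tendsto_stdPhi_atTop.eventually_const_lt hu.2
    exact this.exists
  have hab : a ≤ b := by
    by_contra h
    push_neg at h
    exact absurd (stdPhi_strictMono h) (by linarith)
  obtain ⟨x, _, hx⟩ := intermediate_value_Icc hab (stdPhi_continuous.continuousOn)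
    ⟨ha.le, hb.le⟩
  exact ⟨x, hx⟩

lemma stdPhi_stdPhiInv {u : ℝ} (hu : u ∈ Ioo (0:ℝ) 1) : stdPhi (stdPhiInv u) = u := by
  obtain ⟨x, hx⟩ := exists_stdPhi_eq hu
  rw [← hx, stdPhiInv_stdPhi]

lemma range_stdPhi : Set.range stdPhi = Ioo 0 1 := by
  ext u
  constructor
  · rintro ⟨x, rfl⟩
    exact ⟨stdPhi_pos x, stdPhi_lt_one x⟩
  · intro hu
    obtain ⟨x, hx⟩ := exists_stdPhi_eq hu
    exact ⟨x, hx⟩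

lemma tendsto_mul_exp_atBot : Tendsto (fun y : ℝ => y * rexp y) atBot (nhds 0) := by
  have h := (tendsto_pow_mul_exp_neg_atTop_nhds_zero 1).comp tendsto_neg_atBot_atTop
  have h2 := h.neg
  simp only [neg_zero] at h2
  apply h2.congr
  intro y
  simp only [Function.comp, pow_one, neg_neg, Function.comp_apply]
  ring

lemma tendsto_stdphi_atBot : Tendsto stdphi atBot (nhds 0) := by
  refine squeeze_zero_norm (a := fun y => rexp (1/2) * rexp y) (fun y => ?_) ?_
  · rw [Real.norm_of_nonneg (stdphi_pos y).le]
    exact stdphi_le_exp y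
  · have : Tendsto (fun y : ℝ => rexp (1/2) * rexp y) atBot (nhds (rexp (1/2) * 0)) :=
      Real.tendsto_exp_atBot.const_mul _
    simpa using this

lemma tendsto_stdphi_atTop : Tendsto stdphi atTop (nhds 0) := by
  refine squeeze_zero_norm (a := fun y => rexp (1/2) * rexp (-y)) (fun y => ?_) ?_
  · rw [Real.norm_of_nonneg (stdphi_pos y).le]
    exact stdphi_le_exp_neg y
  · have : Tendsto (fun y : ℝ => rexp (1/2) * rexp (-y)) atTop (nhds (rexp (1/2) * 0)) :=
      (Real.tendsto_exp_atBot.comp tendsto_neg_atTop_atBot).const_mul _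
    simpa using this

lemma tendsto_mul_stdPhi_atBot : Tendsto (fun y : ℝ => y * stdPhi y) atBot (nhds 0) := by
  refine squeeze_zero_norm' (a := fun y => rexp (1/2) * (-(y * rexp y))) ?_ ?_
  · filter_upwards [eventually_le_atBot (0:ℝ)] with y hy
    rw [Real.norm_eq_abs, abs_mul, abs_of_nonpos hy, abs_of_nonneg (stdPhi_nonneg y)]
    have h := stdPhi_le y
    calc -y * stdPhi y ≤ -y * (rexp (1/2) * rexp y) := by
          apply mul_le_mul_of_nonneg_left h (by linarith)
      _ = rexp (1/2) * (-(y * rexp y)) := by ring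
  · have := tendsto_mul_exp_atBot.neg.const_mul (rexp (1/2))
    simpa using this

lemma integrableOn_stdPhi_Iic (x : ℝ) : IntegrableOn stdPhi (Iic x) := by
  apply Integrable.mono (((integrableOn_exp_Iic x).const_mul (rexp (1/2))))
    (stdPhi_continuous.aestronglyMeasurable)
  filter_upwards with y
  rw [Real.norm_of_nonneg (stdPhi_nonneg y), Real.norm_of_nonneg (by positivity)]
  exact stdPhi_le y

lemma integral_Iic_stdPhi (x : ℝ) : ∫ y in Iic x, stdPhi y = x * stdPhi x + stdphi x := by
  have hderiv : ∀ y ∈ Iic x, HasDerivAt (fun y => y * stdPhi y + stdphi y) (stdPhi y) y := by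
    intro y _
    have h := ((hasDerivAt_id y).mul (hasDerivAt_stdPhi y)).add (hasDerivAt_stdphi y)
    refine h.congr_deriv ?_
    simp only [one_mul, id]
    ring
  have htend : Tendsto (fun y : ℝ => y * stdPhi y + stdphi y) atBot (nhds 0) := by
    have := tendsto_mul_stdPhi_atBot.add tendsto_stdphi_atBot
    simpa using this
  have := integral_Iic_of_hasDerivAt_of_tendsto' hderiv (integrableOn_stdPhi_Iic x) htend
  rw [this]; ring

lemma one_sub_stdPhi_le (y : ℝ) : 1 - stdPhi y ≤ rexp (1/2) * rexp (-y) := by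
  have h := stdPhi_add_Ioi y
  have := Ioi_stdphi_le y
  linarith

lemma one_sub_stdPhi_nonneg (y : ℝ) : 0 ≤ 1 - stdPhi y := by
  have := stdPhi_lt_one y
  linarith

lemma integrableOn_one_sub_stdPhi (x : ℝ) :
    IntegrableOn (fun y => 1 - stdPhi y) (Ioi x) := by
  have hint : IntegrableOn (fun t : ℝ => rexp (1/2) * rexp (-t)) (Ioi x) := by
    have := (exp_neg_integrableOn_Ioi x (b := 1) one_pos).const_mul (rexp (1/2))
    simpa [IntegrableOn] using this
  apply Integrable.mono hint
    ((continuous_const.sub stdPhi_continuous).aestronglyMeasurable)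
  filter_upwards with y
  show ‖1 - stdPhi y‖ ≤ _
  rw [Real.norm_of_nonneg (one_sub_stdPhi_nonneg y), Real.norm_of_nonneg (by positivity)]
  exact one_sub_stdPhi_le y

lemma tendsto_mul_one_sub_stdPhi_atTop :
    Tendsto (fun y : ℝ => y * (1 - stdPhi y)) atTop (nhds 0) := by
  refine squeeze_zero_norm' (a := fun y => rexp (1/2) * (y * rexp (-y))) ?_ ?_
  · filter_upwards [eventually_ge_atTop (0:ℝ)] with y hy
    rw [Real.norm_eq_abs, abs_mul, abs_of_nonneg hy, abs_of_nonneg (one_sub_stdPhi_nonneg y)]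
    have h := one_sub_stdPhi_le y
    calc y * (1 - stdPhi y) ≤ y * (rexp (1/2) * rexp (-y)) := by
          apply mul_le_mul_of_nonneg_left h hy
      _ = rexp (1/2) * (y * rexp (-y)) := by ring
  · have h := (tendsto_pow_mul_exp_neg_atTop_nhds_zero 1).const_mul (rexp (1/2))
    simp only [pow_one, mul_zero] at h
    exact h

lemma integral_Ioi_one_sub_stdPhi (x : ℝ) :
    ∫ y in Ioi x, (1 - stdPhi y) = stdphi x - x * (1 - stdPhi x) := by
  have hderiv : ∀ y ∈ Ici x,
      HasDerivAt (fun y => y * (1 - stdPhi y) - stdphi y) (1 - stdPhi y) y := by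
    intro y _
    have h := (((hasDerivAt_id y).mul ((hasDerivAt_const y (1:ℝ)).sub (hasDerivAt_stdPhi y)))).sub
      (hasDerivAt_stdphi y)
    refine h.congr_deriv ?_
    simp only [one_mul, id, zero_sub, Pi.sub_apply]
    ring
  have htend : Tendsto (fun y : ℝ => y * (1 - stdPhi y) - stdphi y) atTop (nhds 0) := by
    have := tendsto_mul_one_sub_stdPhi_atTop.sub tendsto_stdphi_atTop
    simpa using this
  have := integral_Ioi_of_hasDerivAt_of_tendsto' hderiv (integrableOn_one_sub_stdPhi x) htend
  rw [this]; ring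

lemma integral_min_sub (u : ℝ) (hu : u ∈ Ioo (0:ℝ) 1) :
    ∫ y, (min u (stdPhi y) - u * stdPhi y) = stdphi (stdPhiInv u) := by
  set x := stdPhiInv u with hx
  have hxu : stdPhi x = u := stdPhi_stdPhiInv hu
  have hIic : ∀ y ∈ Iic x, min u (stdPhi y) - u * stdPhi y = (1 - u) * stdPhi y := by
    intro y hy
    have h : stdPhi y ≤ u := hxu ▸ stdPhi_strictMono.monotone hy
    rw [min_eq_right h]
    ring
  have hIoi : ∀ y ∈ Ioi x, min u (stdPhi y) - u * stdPhi y = u * (1 - stdPhi y) := by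
    intro y hy
    have h : u ≤ stdPhi y := hxu ▸ (stdPhi_strictMono hy).le
    rw [min_eq_left h]
    ring
  have hint1 : IntegrableOn (fun y => min u (stdPhi y) - u * stdPhi y) (Iic x) := by
    apply IntegrableOn.congr_fun ((integrableOn_stdPhi_Iic x).const_mul (1 - u)) _
      measurableSet_Iic
    intro y hy
    exact (hIic y hy).symm
  have hint2 : IntegrableOn (fun y => min u (stdPhi y) - u * stdPhi y) (Ioi x) := by
    apply IntegrableOn.congr_fun ((integrableOn_one_sub_stdPhi x).const_mul u) _
      measurableSet_Ioi
    intro y hy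
    exact (hIoi y hy).symm
  rw [← intervalIntegral.integral_Iic_add_Ioi hint1 hint2]
  have e1 : ∫ y in Iic x, (min u (stdPhi y) - u * stdPhi y) = (1 - u) * (x * u + stdphi x) := by
    rw [setIntegral_congr_fun measurableSet_Iic hIic, integral_const_mul,
      integral_Iic_stdPhi, hxu]
  have e2 : ∫ y in Ioi x, (min u (stdPhi y) - u * stdPhi y)
      = u * (stdphi x - x * (1 - u)) := by
    rw [setIntegral_congr_fun measurableSet_Ioi hIoi, integral_const_mul,
      integral_Ioi_one_sub_stdPhi, hxu]
  rw [e1, e2]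
  ring

lemma inner_integral (u : ℝ) (hu : u ∈ Ioo (0:ℝ) 1) :
    ∫ v in Ioo (0:ℝ) 1, (min u v - u * v) / stdphi (stdPhiInv v)
      = stdphi (stdPhiInv u) := by
  rw [← range_stdPhi, ← Set.image_univ,
    integral_image_eq_integral_abs_deriv_smul MeasurableSet.univ
      (fun y _ => (hasDerivAt_stdPhi y).hasDerivWithinAt)
      (stdPhi_strictMono.injective.injOn) _]
  rw [Measure.restrict_univ]
  rw [← integral_min_sub u hu]
  congr 1
  ext y
  rw [stdPhiInv_stdPhi, abs_of_pos (stdphi_pos y), smul_eq_mul,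
    mul_div_cancel₀ _ (stdphi_pos y).ne']

/-- `∫₀¹∫₀¹ (min(u,v) − uv)/(φ(Φ⁻¹(u))·φ(Φ⁻¹(v))) du dv = 1`. -/
theorem stmt4 :
    ∫ u in Set.Ioo (0:ℝ) 1, ∫ v in Set.Ioo (0:ℝ) 1,
        (min u v - u * v) / (stdphi (stdPhiInv u) * stdphi (stdPhiInv v))
      = 1 := by
  have key : ∀ u ∈ Ioo (0:ℝ) 1,
      (∫ v in Ioo (0:ℝ) 1,
        (min u v - u * v) / (stdphi (stdPhiInv u) * stdphi (stdPhiInv v))) = 1 := by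
    intro u hu
    have h1 : ∀ v : ℝ, (min u v - u * v) / (stdphi (stdPhiInv u) * stdphi (stdPhiInv v))
        = (stdphi (stdPhiInv u))⁻¹ * ((min u v - u * v) / stdphi (stdPhiInv v)) := by
      intro v
      field_simp
    simp_rw [h1]
    rw [integral_const_mul, inner_integral u hu,
      inv_mul_cancel₀ (stdphi_pos (stdPhiInv u)).ne']
  rw [setIntegral_congr_fun measurableSet_Ioo key]
  simp
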